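/- arXiv:2605.07222 — 3 statements merged into one kernel-verified Lean document; each statement's English description precedes it below -/
import Mathlib

section
/- Let P ≥ 1 and n_c ≥ 1 be integers, let A : ℝ → ℝ be Lipschitz with constant C_A ≥ 0 (i.e. |A(t) − A(t′)| ≤ C_A·|t − t′| for all t, t′), and let s : Fin P → ℝ. Define the reshaped matrix M ∈ ℝ^{P × n_c} by M_{j,i} = A(i·P + j)·s(j), the Level vector L ∈ ℝ^{n_c} by L_i = A(i·P), and the Shape vector S ∈ ℝ^{P} by S_j = s(j). Set m = min over i ∈ Fin n_c of |A(i·P)|, and assume the slow-variation condition C_A·P ≤ m/2 with m > 0, and that s is not identically zero. Then the Frobenius norms satisfy ‖M − L·Sᵀ‖_F ≤ (2·C_A·P / m)·‖M‖_F. -/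
/-- **Proposition 1 (slow amplitude ⇒ approximate rank-1).**
Let `P ≥ 1`, `n_c ≥ 1`, let `A : ℝ → ℝ` be Lipschitz with constant `C_A ≥ 0`, and
`s : Fin P → ℝ`.  With `M j i = A (i·P + j) · s j`, `L i = A (i·P)`, `S j = s j`,
and `m = min_{i} |A (i·P)|`, under the slow-variation condition `C_A·P ≤ m/2`
with `m > 0` and `s` not identically zero, the Frobenius norms satisfy
`‖M − L·Sᵀ‖_F ≤ (2·C_A·P / m) · ‖M‖_F`. -/
theorem rank1_frobenius_bound
    (P n_c : ℕ) (hP : 1 ≤ P) (hnc : 1 ≤ n_c)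
    (A : ℝ → ℝ) (C_A : ℝ) (hCA : 0 ≤ C_A)
    (hLip : ∀ t t' : ℝ, |A t - A t'| ≤ C_A * |t - t'|)
    (s : Fin P → ℝ) (hs : ∃ j, s j ≠ 0)
    (M : Matrix (Fin P) (Fin n_c) ℝ)
    (hM : ∀ (j : Fin P) (i : Fin n_c), M j i = A (((i : ℕ) * P + (j : ℕ) : ℕ) : ℝ) * s j)
    (L : Fin n_c → ℝ) (hL : ∀ i : Fin n_c, L i = A (((i : ℕ) * P : ℕ) : ℝ))
    (S : Fin P → ℝ) (hS : ∀ j, S j = s j)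
    (m : ℝ)
    (hm : IsLeast {x : ℝ | ∃ i : Fin n_c, x = |A (((i : ℕ) * P : ℕ) : ℝ)|} m)
    (hm_pos : 0 < m)
    (hslow : C_A * P ≤ m / 2) :
    Real.sqrt (∑ j : Fin P, ∑ i : Fin n_c, (M j i - L i * S j) ^ 2)
      ≤ (2 * C_A * P / m) * Real.sqrt (∑ j : Fin P, ∑ i : Fin n_c, (M j i) ^ 2) := by
  have hcp0 : (0:ℝ) ≤ C_A * P := by positivity
  -- pointwise difference bound
  have hdiff : ∀ (j : Fin P) (i : Fin n_c),
      |A (((i : ℕ) * P + (j : ℕ) : ℕ) : ℝ) - A (((i : ℕ) * P : ℕ) : ℝ)| ≤ C_A * P := by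
    intro j i
    calc |A (((i : ℕ) * P + (j : ℕ) : ℕ) : ℝ) - A (((i : ℕ) * P : ℕ) : ℝ)|
        ≤ C_A * |(((i : ℕ) * P + (j : ℕ) : ℕ) : ℝ) - (((i : ℕ) * P : ℕ) : ℝ)| := hLip _ _
      _ = C_A * (j : ℕ) := by
          push_cast
          rw [show ((i:ℕ):ℝ) * P + (j:ℕ) - (i:ℕ) * P = ((j:ℕ):ℝ) by ring,
            abs_of_nonneg (by positivity)]
      _ ≤ C_A * P := by
          have : ((j:ℕ):ℝ) ≤ (P:ℝ) := by exact_mod_cast le_of_lt j.isLt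
          exact mul_le_mul_of_nonneg_left this hCA
  -- lower bound on |A(iP+j)|
  have hA_lb : ∀ (j : Fin P) (i : Fin n_c),
      m / 2 ≤ |A (((i : ℕ) * P + (j : ℕ) : ℕ) : ℝ)| := by
    intro j i
    have h1 : m ≤ |A (((i : ℕ) * P : ℕ) : ℝ)| := hm.2 ⟨i, rfl⟩
    have h2 := hdiff j i
    have h3 : |A (((i : ℕ) * P : ℕ) : ℝ)| - |A (((i : ℕ) * P + (j : ℕ) : ℕ) : ℝ)|
        ≤ |A (((i : ℕ) * P + (j : ℕ) : ℕ) : ℝ) - A (((i : ℕ) * P : ℕ) : ℝ)| := by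
      rw [abs_sub_comm]
      exact abs_sub_abs_le_abs_sub _ _
    linarith
  -- pointwise squared bounds
  have hsum1 : ∑ j : Fin P, ∑ i : Fin n_c, (M j i - L i * S j) ^ 2
      ≤ ∑ j : Fin P, ∑ i : Fin n_c, (C_A * P) ^ 2 * (s j) ^ 2 := by
    refine Finset.sum_le_sum fun j _ => Finset.sum_le_sum fun i _ => ?_
    rw [hM, hL, hS, show A (((i : ℕ) * P + (j : ℕ) : ℕ) : ℝ) * s j
        - A (((i : ℕ) * P : ℕ) : ℝ) * s j
        = (A (((i : ℕ) * P + (j : ℕ) : ℕ) : ℝ) - A (((i : ℕ) * P : ℕ) : ℝ)) * s j by ring,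
      mul_pow]
    have := sq_le_sq' (neg_le_of_abs_le (hdiff j i)) (le_of_abs_le (hdiff j i))
    exact mul_le_mul_of_nonneg_right this (sq_nonneg _)
  have hsum2 : ∑ j : Fin P, ∑ i : Fin n_c, (m / 2) ^ 2 * (s j) ^ 2
      ≤ ∑ j : Fin P, ∑ i : Fin n_c, (M j i) ^ 2 := by
    refine Finset.sum_le_sum fun j _ => Finset.sum_le_sum fun i _ => ?_
    rw [hM, mul_pow]
    have h := hA_lb j i
    have : (m / 2) ^ 2 ≤ (A (((i : ℕ) * P + (j : ℕ) : ℕ) : ℝ)) ^ 2 := by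
      calc (m / 2) ^ 2 ≤ |A (((i : ℕ) * P + (j : ℕ) : ℕ) : ℝ)| ^ 2 :=
            pow_le_pow_left₀ (by linarith) h 2
        _ = _ := sq_abs _
    exact mul_le_mul_of_nonneg_right this (sq_nonneg _)
  set T : ℝ := ∑ j : Fin P, ∑ i : Fin n_c, (s j) ^ 2 with hT
  have hT0 : 0 ≤ T := Finset.sum_nonneg fun j _ => Finset.sum_nonneg fun i _ => sq_nonneg _
  have e1 : ∑ j : Fin P, ∑ i : Fin n_c, (C_A * P) ^ 2 * (s j) ^ 2 = (C_A * P) ^ 2 * T := by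
    simp only [hT, Finset.mul_sum]
  have e2 : ∑ j : Fin P, ∑ i : Fin n_c, (m / 2) ^ 2 * (s j) ^ 2 = (m / 2) ^ 2 * T := by
    simp only [hT, Finset.mul_sum]
  have lhs_le : Real.sqrt (∑ j : Fin P, ∑ i : Fin n_c, (M j i - L i * S j) ^ 2)
      ≤ C_A * P * Real.sqrt T := by
    have := Real.sqrt_le_sqrt (hsum1.trans_eq e1)
    rwa [Real.sqrt_mul (sq_nonneg _), Real.sqrt_sq hcp0] at this
  have rhs_ge : m / 2 * Real.sqrt T ≤ Real.sqrt (∑ j : Fin P, ∑ i : Fin n_c, (M j i) ^ 2) := by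
    have := Real.sqrt_le_sqrt (e2 ▸ hsum2)
    rwa [Real.sqrt_mul (sq_nonneg _), Real.sqrt_sq (by linarith)] at this
  calc Real.sqrt (∑ j : Fin P, ∑ i : Fin n_c, (M j i - L i * S j) ^ 2)
      ≤ C_A * P * Real.sqrt T := lhs_le
    _ = (2 * C_A * P / m) * (m / 2 * Real.sqrt T) := by field_simp
    _ ≤ (2 * C_A * P / m) * Real.sqrt (∑ j : Fin P, ∑ i : Fin n_c, (M j i) ^ 2) := by
        apply mul_le_mul_of_nonneg_left rhs_ge
        positivity
end

section
/- Let P ≥ 1 and n_c ≥ 1 be integers, let A : ℝ → ℝ be Lipschitz with constant C_A ≥ 0, and let s : Fin P → ℝ. Define M_{j,i} = A(i·P + j)·s(j) and set m = min over i ∈ Fin n_c of |A(i·P)|. If C_A·P ≤ m/2, then ‖M‖_F² ≥ (1/4)·m²·n_c·(Σ_{j ∈ Fin P} s(j)²). -/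
/-- **Frobenius lower bound in the proof of Proposition 1.**
With `M j i = A (i·P + j) · s j` and `m = min_i |A (i·P)|`, under the slow-variation
condition `C_A·P ≤ m/2`, one has `‖M‖_F² ≥ (1/4)·m²·n_c·(Σ_j s j²)`. -/
theorem rank1_frobenius_lower_bound
    (P n_c : ℕ) (hP : 1 ≤ P) (hnc : 1 ≤ n_c)
    (A : ℝ → ℝ) (C_A : ℝ) (hCA : 0 ≤ C_A)
    (hLip : ∀ t t' : ℝ, |A t - A t'| ≤ C_A * |t - t'|)
    (s : Fin P → ℝ)
    (M : Matrix (Fin P) (Fin n_c) ℝ)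
    (hM : ∀ (j : Fin P) (i : Fin n_c), M j i = A (((i : ℕ) * P + (j : ℕ) : ℕ) : ℝ) * s j)
    (m : ℝ)
    (hm : IsLeast {x : ℝ | ∃ i : Fin n_c, x = |A (((i : ℕ) * P : ℕ) : ℝ)|} m)
    (hslow : C_A * P ≤ m / 2) :
    (1 / 4) * m ^ 2 * (n_c : ℝ) * (∑ j : Fin P, (s j) ^ 2)
      ≤ ∑ j : Fin P, ∑ i : Fin n_c, (M j i) ^ 2 := by
  have hm0 : 0 ≤ m := by
    obtain ⟨⟨i, hi⟩, _⟩ := hm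
    rw [hi]; exact abs_nonneg _
  -- key pointwise bound
  have key : ∀ (j : Fin P) (i : Fin n_c),
      m / 2 ≤ |A (((i : ℕ) * P + (j : ℕ) : ℕ) : ℝ)| := by
    intro j i
    have hmle : m ≤ |A (((i : ℕ) * P : ℕ) : ℝ)| := hm.2 ⟨i, rfl⟩
    have hlip := hLip (((i : ℕ) * P : ℕ) : ℝ) (((i : ℕ) * P + (j : ℕ) : ℕ) : ℝ)
    have hdiff : |(((i : ℕ) * P : ℕ) : ℝ) - (((i : ℕ) * P + (j : ℕ) : ℕ) : ℝ)| = (j : ℕ) := by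
      push_cast
      rw [abs_sub_comm]
      simp [abs_of_nonneg]
    have hj : ((j : ℕ) : ℝ) ≤ (P : ℝ) := by
      exact_mod_cast (j.isLt.le)
    have h1 : |A (((i : ℕ) * P : ℕ) : ℝ)| - |A (((i : ℕ) * P + (j : ℕ) : ℕ) : ℝ)|
        ≤ C_A * P := by
      calc _ ≤ |A (((i : ℕ) * P : ℕ) : ℝ) - A (((i : ℕ) * P + (j : ℕ) : ℕ) : ℝ)| :=
            abs_sub_abs_le_abs_sub _ _
        _ ≤ C_A * (j : ℕ) := by rw [← hdiff]; exact hlip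
        _ ≤ C_A * P := by exact mul_le_mul_of_nonneg_left hj hCA
    nlinarith [hmle]
  have hterm : ∀ (j : Fin P) (i : Fin n_c), (m / 2) ^ 2 * (s j) ^ 2 ≤ (M j i) ^ 2 := by
    intro j i
    rw [hM j i, mul_pow]
    have h2 := key j i
    have hsq : (m / 2) ^ 2 ≤ A (((i : ℕ) * P + (j : ℕ) : ℕ) : ℝ) ^ 2 := by
      calc (m / 2) ^ 2 ≤ |A (((i : ℕ) * P + (j : ℕ) : ℕ) : ℝ)| ^ 2 :=
            pow_le_pow_left₀ (by linarith) h2 2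
        _ = _ := sq_abs _
    exact mul_le_mul_of_nonneg_right hsq (sq_nonneg _)
  calc (1 / 4) * m ^ 2 * (n_c : ℝ) * (∑ j : Fin P, (s j) ^ 2)
      = ∑ j : Fin P, ∑ _i : Fin n_c, (m / 2) ^ 2 * (s j) ^ 2 := by
        simp [Finset.sum_const, Finset.mul_sum]
        ring_nf
    _ ≤ ∑ j : Fin P, ∑ i : Fin n_c, (M j i) ^ 2 := by
        apply Finset.sum_le_sum
        intro j _
        exact Finset.sum_le_sum fun i _ => hterm j i
end

section
/- Let (Ω, ℙ) be a probability space, P ≥ 1, n ≥ 1, K ≤ n, σ ≥ 0. Let ε : Fin P → Fin n → Ω → ℝ be a jointly independent family of square-integrable random variables with mean 0 and E[ε_{j,i}²] = σ². Fix j₀ ∈ Fin P, fixed weights w : Fin n → ℝ, a subset W ⊆ Fin n of size K, and constants ℓ : W → ℝ with ℓ_k ≠ 0. Define ΔL = Σ_{i ∈ Fin n} w_i·(Σ_{j ∈ Fin P} ε_{j,i}) and ΔS = (1/K)·Σ_{k ∈ W} ε_{j₀,k}/ℓ_k. Then E[ΔL·ΔS] = (σ²/K)·Σ_{k ∈ W}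 w_k/ℓ_k. -/
/-!
Both errors are linear combinations of the same white-noise family `ε`, whose second moments
are `E[ε_a ε_b] = σ² δ_{ab}` by independence and centring. Hence `E[ΔL·ΔS]` is `σ²` times the sum,
over the index pairs `(j₀, k)`, `k ∈ W`, that occur in both combinations, of the product of their
coefficients `w_k` and `1 / (K ℓ_k)`.
-/

open MeasureTheory ProbabilityTheory Finset

section WhiteNoise

variable {Ω ι : Type*} [MeasurableSpace Ω] {μ : Measure Ω} [DecidableEq ι]
  {X : ι → Ω → ℝ} {σ : ℝ}

theorem integral_mul_eq_ite_of_iIndepFun (hL2 : ∀ a, MemLp (X a) 2 μ) (hindep : iIndepFun X μ)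
    (hmean : ∀ a, ∫ ω, X a ω ∂μ = 0) (hvar : ∀ a, ∫ ω, X a ω ^ 2 ∂μ = σ ^ 2) (a b : ι) :
    ∫ ω, X a ω * X b ω ∂μ = if a = b then σ ^ 2 else 0 := by
  split_ifs with hab
  · subst hab
    simp only [← sq, hvar]
  · have h := (hindep.indepFun hab).integral_mul_eq_mul_integral
      (hL2 a).aestronglyMeasurable (hL2 b).aestronglyMeasurable
    simpa [hmean] using h

theorem integral_sum_mul_sum_of_integral_mul_eq_ite (hL2 : ∀ a, MemLp (X a) 2 μ)
    (hcov : ∀ a b, ∫ ω, X a ω * X b ω ∂μ = if a = b then σ ^ 2 else 0)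
    (s t : Finset ι) (c d : ι → ℝ) :
    ∫ ω, (∑ a ∈ s, c a * X a ω) * (∑ b ∈ t, d b * X b ω) ∂μ
      = σ ^ 2 * ∑ a ∈ s ∩ t, c a * d a := by
  have hint : ∀ a b, Integrable (fun ω => c a * d b * (X a ω * X b ω)) μ := fun a b =>
    ((hL2 a).integrable_mul (hL2 b)).const_mul _
  calc ∫ ω, (∑ a ∈ s, c a * X a ω) * (∑ b ∈ t, d b * X b ω) ∂μ
      = ∫ ω, ∑ a ∈ s, ∑ b ∈ t, c a * d b * (X a ω * X b ω) ∂μ := by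
        congr 1 with ω
        rw [sum_mul_sum]
        exact sum_congr rfl fun a _ => sum_congr rfl fun b _ => by ring
    _ = ∑ a ∈ s, ∑ b ∈ t, c a * d b * ∫ ω, X a ω * X b ω ∂μ := by
        rw [integral_finsetSum _ fun a _ => integrable_finsetSum _ fun b _ => hint a b]
        refine sum_congr rfl fun a _ => ?_
        rw [integral_finsetSum _ fun b _ => hint a b]
        exact sum_congr rfl fun b _ => integral_const_mul _ _
    _ = σ ^ 2 * ∑ a ∈ s ∩ t, c a * d a := by
        simp only [hcov, mul_ite, mul_zero, sum_ite_eq, ← sum_ite_mem, mul_sum]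
        exact sum_congr rfl fun a _ => by split_ifs <;> ring

end WhiteNoise

theorem level_shape_cross_covariance_general
    {Ω : Type*} [MeasureSpace Ω]
    (P n K : ℕ) (σ : ℝ)
    (ε : Fin P → Fin n → Ω → ℝ)
    (hL2 : ∀ j i, MemLp (ε j i) 2 ℙ)
    (hindep : iIndepFun
      (fun p : Fin P × Fin n => ε p.1 p.2) ℙ)
    (hmean : ∀ j i, (∫ ω : Ω, ε j i ω ∂ℙ) = 0)
    (hvar : ∀ j i, (∫ ω : Ω, (ε j i ω) ^ 2 ∂ℙ) = σ ^ 2)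
    (j₀ : Fin P) (w : Fin n → ℝ)
    (W : Finset (Fin n))
    (ℓ : Fin n → ℝ) :
    (∫ ω : Ω, (∑ i : Fin n, w i * ∑ j : Fin P, ε j i ω)
        * ((K : ℝ)⁻¹ * ∑ k ∈ W, ε j₀ k ω / ℓ k) ∂ℙ)
      = (σ ^ 2 / K) * ∑ k ∈ W, w k / ℓ k := by
  have hL2' (p : Fin P × Fin n) : MemLp (ε p.1 p.2) 2 ℙ := hL2 p.1 p.2
  have hcov := integral_mul_eq_ite_of_iIndepFun hL2' hindep
    (fun p => hmean p.1 p.2) (fun p => hvar p.1 p.2)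
  have hlevel : ∀ ω, ∑ i : Fin n, w i * ∑ j : Fin P, ε j i ω
      = ∑ p : Fin P × Fin n, w p.2 * ε p.1 p.2 ω := fun ω => by
    simp only [Fintype.sum_prod_type_right, mul_sum]
  have hshape : ∀ ω, (K : ℝ)⁻¹ * ∑ k ∈ W, ε j₀ k ω / ℓ k
      = ∑ p ∈ {j₀} ×ˢ W, (K : ℝ)⁻¹ / ℓ p.2 * ε p.1 p.2 ω := fun ω => by
    rw [sum_product, sum_singleton, mul_sum]
    exact sum_congr rfl fun k _ => by ring
  calc _ = ∫ ω, (∑ p : Fin P × Fin n, w p.2 * ε p.1 p.2 ω)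
          * (∑ p ∈ {j₀} ×ˢ W, (K : ℝ)⁻¹ / ℓ p.2 * ε p.1 p.2 ω) ∂ℙ := by
        simp only [hlevel, hshape]
    _ = σ ^ 2 * ∑ p ∈ univ ∩ {j₀} ×ˢ W, w p.2 * ((K : ℝ)⁻¹ / ℓ p.2) :=
        integral_sum_mul_sum_of_integral_mul_eq_ite hL2' hcov _ _ _ _
    _ = (σ ^ 2 / K) * ∑ k ∈ W, w k / ℓ k := by
        rw [univ_inter, sum_product, sum_singleton, mul_sum, mul_sum]
        exact sum_congr rfl fun k _ => by ring

/-- **Level–Shape cross-covariance formula (Step 4 of the proof of Theorem 2).**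
For a jointly independent, mean-zero family `ε_{j,i}` with `E[ε_{j,i}²] = σ²`,
fixed weights `w`, a `K`-element window `W`, and nonzero constants `ℓ_k` on `W`,
the Level error `ΔL = Σ_i w_i·(Σ_j ε_{j,i})` and the oracle Shape error
`ΔS = (1/K)·Σ_{k∈W} ε_{j₀,k}/ℓ_k` satisfy
`E[ΔL·ΔS] = (σ²/K)·Σ_{k∈W} w_k/ℓ_k`. -/
theorem level_shape_cross_covariance
    {Ω : Type*} [MeasureSpace Ω] [IsProbabilityMeasure (ℙ : Measure Ω)]
    (P n K : ℕ) (hP : 1 ≤ P) (hn : 1 ≤ n) (hKn : K ≤ n) (σ : ℝ) (hσ : 0 ≤ σ)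
    (ε : Fin P → Fin n → Ω → ℝ)
    (hmeas : ∀ j i, Measurable (ε j i))
    (hL2 : ∀ j i, MemLp (ε j i) 2 ℙ)
    (hindep : iIndepFun
      (fun p : Fin P × Fin n => ε p.1 p.2) ℙ)
    (hmean : ∀ j i, (∫ ω : Ω, ε j i ω ∂ℙ) = 0)
    (hvar : ∀ j i, (∫ ω : Ω, (ε j i ω) ^ 2 ∂ℙ) = σ ^ 2)
    (j₀ : Fin P) (w : Fin n → ℝ)
    (W : Finset (Fin n)) (hW : W.card = K)
    (ℓ : Fin n → ℝ) (hℓ : ∀ k ∈ W, ℓ k ≠ 0) :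
    (∫ ω : Ω, (∑ i : Fin n, w i * ∑ j : Fin P, ε j i ω)
        * ((K : ℝ)⁻¹ * ∑ k ∈ W, ε j₀ k ω / ℓ k) ∂ℙ)
      = (σ ^ 2 / K) * ∑ k ∈ W, w k / ℓ k :=
  level_shape_cross_covariance_general P n K σ ε hL2 hindep hmean hvar j₀ w W ℓ
end
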